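/- arXiv:1708.04881 — 2 statements merged into one kernel-verified Lean document; each statement's English description precedes it below -/
import Mathlib

section
/- For every F ⊆ E, f_{w,d}(F) = min_{X ⊆ N_F} ( f_w(E_X ∩ F) + d(N_F \ X) ), where d(Y) := Σ_{i∈Y} d_i. -/
open Finset

noncomputable section

namespace TwoSidedMarket

variable {B S : Type*} [Fintype B] [Fintype S] [DecidableEq B] [DecidableEq S]

/-- A function `f` on subsets of a ground set `G` is monotone submodular:
`f ∅ = 0`, monotone on subsets of `G`, and submodular on subsets of `G`. -/
def IsMonoSubmodular {α : Type*} [DecidableEq α] (G : Finset α) (f : Finset α → ℝ) : Prop :=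
  f ∅ = 0 ∧ (∀ A B : Finset α, A ⊆ B → B ⊆ G → f A ≤ f B) ∧
    ∀ A B : Finset α, A ⊆ G → B ⊆ G → f (A ∩ B) + f (A ∪ B) ≤ f A + f B

/-- Monotone submodular, without the requirement of vanishing at `∅`. -/
def IsMonoSubmodularWeak {α : Type*} [DecidableEq α] (G : Finset α) (f : Finset α → ℝ) : Prop :=
  (∀ A B : Finset α, A ⊆ B → B ⊆ G → f A ≤ f B) ∧
    ∀ A B : Finset α, A ⊆ G → B ⊆ G → f (A ∩ B) + f (A ∪ B) ≤ f A + f B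

/-- `E_i`: the edges of `E` incident to buyer `i`. -/
def Ei (E : Finset (B × S)) (i : B) : Finset (B × S) := E.filter fun e => e.1 = i

/-- `E_j`: the edges of `E` incident to seller `j`. -/
def Ej (E : Finset (B × S)) (j : S) : Finset (B × S) := E.filter fun e => e.2 = j

/-- `E_X`: the edges of `E` incident to some buyer in `X`. -/
def EX (E : Finset (B × S)) (X : Finset B) : Finset (B × S) := E.filter fun e => e.1 ∈ X

/-- `N_F`: the buyers incident to some edge of `F`. -/
def NF (F : Finset (B × S)) : Finset B := F.image Prod.fst

/-- `x(F) = Σ_{e ∈ F} x e`. -/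
def vsum (x : B × S → ℝ) (F : Finset (B × S)) : ℝ := ∑ e ∈ F, x e

/-- Membership `w ∈ P = ⊕_j P_j`: `w` is nonnegative, supported on `E`, and
`w|_{E_j} ∈ P_j` for every seller `j`. -/
def memP (E : Finset (B × S)) (fj : S → Finset (B × S) → ℝ) (w : B × S → ℝ) : Prop :=
  (∀ e, 0 ≤ w e) ∧ (∀ e ∉ E, w e = 0) ∧ ∀ j : S, ∀ F ⊆ Ej E j, vsum w F ≤ fj j F

/-- `f(F) := Σ_{j ∈ M} f_j (E_j ∩ F)`. -/
def fTot (E : Finset (B × S)) (fj : S → Finset (B × S) → ℝ) (F : Finset (B × S)) : ℝ :=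
  ∑ j : S, fj j (Ej E j ∩ F)

/-- `f_w(F) := min_{F ⊆ F' ⊆ E} (f(F') - w(F'))`. -/
def fw (E : Finset (B × S)) (fj : S → Finset (B × S) → ℝ)
    (w : B × S → ℝ) (F : Finset (B × S)) : ℝ :=
  sInf {r : ℝ | ∃ F' : Finset (B × S), F ⊆ F' ∧ F' ⊆ E ∧ r = fTot E fj F' - vsum w F'}

/-- Membership in the remnant supply polytope `P_{w,d}`. -/
def memPwd (E : Finset (B × S)) (fj : S → Finset (B × S) → ℝ)
    (w : B × S → ℝ) (d : B → ℝ) (x : B × S → ℝ) : Prop :=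
  (∀ e, 0 ≤ x e) ∧ (∀ e ∉ E, x e = 0) ∧ memP E fj (w + x) ∧
    ∀ i : B, vsum x (Ei E i) ≤ d i

/-- `f_{w,d}(F) := max_{x ∈ P_{w,d}} x(F)`. -/
def fwd (E : Finset (B × S)) (fj : S → Finset (B × S) → ℝ)
    (w : B × S → ℝ) (d : B → ℝ) (F : Finset (B × S)) : ℝ :=
  sSup {r : ℝ | ∃ x : B × S → ℝ, memPwd E fj w d x ∧ r = vsum x F}

/-- `P^i_{w,d}(ξ)`: the remnant supply polytope of the buyers other than `i`,
given that buyer `i` receives `ξ`.  (Vectors indexed by `N - i` are encoded as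
functions on all of `B` vanishing at `i`.) -/
def PiWd (E : Finset (B × S)) (fj : S → Finset (B × S) → ℝ)
    (w : B × S → ℝ) (d : B → ℝ) (i : B) (ξ : B × S → ℝ) : Set (B → ℝ) :=
  {u | u i = 0 ∧ (∀ k, 0 ≤ u k) ∧
    ∃ x : B × S → ℝ, memPwd E fj w d x ∧ (∀ e ∈ Ei E i, x e = ξ e) ∧
      ∀ k : B, k ≠ i → vsum x (Ei E k) = u k}

/-- The clinching polytope `P^i_{w,d}` of buyer `i`:
all `ξ ∈ ℝ_{≥0}^{E_i}` with `P^i_{w,d}(ξ) = P^i_{w,d}(0)`. -/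
def ClinchP (E : Finset (B × S)) (fj : S → Finset (B × S) → ℝ)
    (w : B × S → ℝ) (d : B → ℝ) (i : B) : Set (B × S → ℝ) :=
  {ξ | (∀ e, 0 ≤ ξ e) ∧ (∀ e ∉ Ei E i, ξ e = 0) ∧
    PiWd E fj w d i ξ = PiWd E fj w d i 0}

/-!
The constraint `w + x ∈ P` says exactly that `x` lies in the polymatroid of the monotone
submodular function `f_w`, so `f_{w,d}(F)` is the maximum of `x(F)` over that polymatroid cut
down by the demands `x(E_i ∩ F) ≤ d_i`; the bound `≤` is then immediate. For `≥`, take a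
maximiser `x` and let `X` be the buyers reachable from a buyer with residual demand in the
exchange graph of `x`, where an arc `a → b` means that `x_a` can be raised at the expense of
`x_b > 0`. If an edge of a reachable buyer were not in a tight set, exchanging along the path
would raise `x(F)`. So `E_X ∩ F` lies in a tight set on which `x` vanishes outside `E_X`, giving
`x(E_X ∩ F) ≥ f_w(E_X ∩ F)`, while buyers outside `X` receive their full demand.
-/

section PolymatroidCapacity

open Filter Topology

variable {α ι : Type*} [DecidableEq ι] {F : Finset α} {g : Finset α → ℝ} {π : α → ι}
  {d : ι → ℝ} {x y : α → ℝ}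

/-- In the application `g = f_w` and `π = Prod.fst` sends an edge to its buyer. -/
structure IsFeasible (F : Finset α) (g : Finset α → ℝ) (π : α → ι) (d : ι → ℝ)
    (x : α → ℝ) : Prop where
  nonneg : ∀ e, 0 ≤ x e
  eq_zero_of_notMem : ∀ e ∉ F, x e = 0
  sum_le : ∀ G ⊆ F, ∑ e ∈ G, x e ≤ g G
  sum_fiber_le : ∀ i, ∑ e ∈ F with π e = i, x e ≤ d i

lemma sum_filter_notMem_eq_sum_fiber (X : Finset ι) (x : α → ℝ) :
    ∑ e ∈ F with π e ∉ X, x e = ∑ i ∈ F.image π \ X, ∑ e ∈ F with π e = i, x e := by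
  have hmaps : ∀ e ∈ F.filter (π · ∉ X), π e ∈ F.image π \ X := fun e he => by
    simp only [mem_filter] at he
    exact mem_sdiff.2 ⟨mem_image_of_mem π he.1, he.2⟩
  rw [← sum_fiberwise_of_maps_to hmaps]
  refine sum_congr rfl fun i hi => ?_
  rw [filter_filter]
  refine sum_congr (filter_congr fun e _ => ?_) fun _ _ => rfl
  exact ⟨And.right, fun h => ⟨h ▸ (mem_sdiff.1 hi).2, h⟩⟩

lemma IsFeasible.sum_le_cut (hx : IsFeasible F g π d x) (X : Finset ι) :
    ∑ e ∈ F, x e ≤ g {e ∈ F | π e ∈ X} + ∑ i ∈ F.image π \ X, d i := by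
  rw [← sum_filter_add_sum_filter_not F (π · ∈ X), sum_filter_notMem_eq_sum_fiber]
  gcongr with i
  · exact hx.sum_le _ (filter_subset _ _)
  · exact hx.sum_fiber_le i

lemma isClosed_setOf_isFeasible : IsClosed {x : α → ℝ | IsFeasible F g π d x} := by
  have hset : {x : α → ℝ | IsFeasible F g π d x} =
      (⋂ e, {x | 0 ≤ x e}) ∩ (⋂ e ∉ F, {x | x e = 0}) ∩
        (⋂ G ⊆ F, {x | ∑ e ∈ G, x e ≤ g G}) ∩ ⋂ i, {x | ∑ e ∈ F with π e = i, x e ≤ d i} := by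
    ext x
    simp only [Set.mem_ofPred_eq, Set.mem_inter_iff, Set.mem_iInter]
    exact ⟨fun ⟨h₁, h₂, h₃, h₄⟩ => ⟨⟨⟨h₁, h₂⟩, h₃⟩, h₄⟩,
      fun ⟨⟨⟨h₁, h₂⟩, h₃⟩, h₄⟩ => ⟨h₁, h₂, h₃, h₄⟩⟩
  rw [hset]
  refine .inter (.inter (.inter ?_ ?_) ?_) ?_
  · exact isClosed_iInter fun e => isClosed_le continuous_const (continuous_apply e)
  · exact isClosed_biInter fun e _ => isClosed_eq (continuous_apply e) continuous_const
  · exact isClosed_biInter fun G _ => isClosed_le (by fun_prop) continuous_const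
  · exact isClosed_iInter fun i => isClosed_le (by fun_prop) continuous_const

def IsTight (F : Finset α) (g : Finset α → ℝ) (x : α → ℝ) (G : Finset α) : Prop :=
  G ⊆ F ∧ ∑ e ∈ G, x e = g G

def IsSaturated (F : Finset α) (g : Finset α → ℝ) (x : α → ℝ) (e : α) : Prop :=
  ∃ G, IsTight F g x G ∧ e ∈ G

/-- `x + ε • (Pi.single a 1 - Pi.single b 1)` stays feasible for small `ε > 0`. -/
def IsExchangeArc (F : Finset α) (g : Finset α → ℝ) (x : α → ℝ) (a b : α) : Prop :=
  IsSaturated F g x a ∧ (∀ G, IsTight F g x G → a ∈ G → b ∈ G) ∧ 0 < x b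

def Reachable (F : Finset α) (g : Finset α → ℝ) (π : α → ι) (d : ι → ℝ) (x : α → ℝ) :
    ℕ → ι → Prop
  | 0, i => ∑ e ∈ F with π e = i, x e < d i
  | m + 1, i => ∃ a b, Reachable F g π d x m (π a) ∧ IsExchangeArc F g x a b ∧ π b = i

lemma IsSaturated.mem {e : α} (he : IsSaturated F g x e) : e ∈ F :=
  he.elim fun _ hG => hG.1.1 hG.2

lemma IsExchangeArc.mem_right {a b : α} (hab : IsExchangeArc F g x a b) : b ∈ F :=
  hab.1.elim fun G hG => hG.1.1 (hab.2.1 G hG.1 hG.2)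

lemma Reachable.of_exchange {m : ℕ} {i : ι}
    (hfiber : ∀ i, ∑ a ∈ F with π a = i, y a = ∑ a ∈ F with π a = i, x a)
    (htight : ∀ G, IsTight F g y G → IsTight F g x G) (hpos : ∀ a, 0 < x a → 0 < y a)
    (hsat : ∀ k < m, ∀ a ∈ F, Reachable F g π d y k (π a) → IsSaturated F g y a)
    (h : Reachable F g π d x m i) : Reachable F g π d y m i := by
  induction m generalizing i with
  | zero => simpa [Reachable, hfiber] using h
  | succ m ih =>
    obtain ⟨a, b, ha, ⟨haSat, hab, hb⟩, rfl⟩ := h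
    have ha' := ih (fun k hk => hsat k (hk.trans (lt_add_one m))) ha
    exact ⟨a, b, ha', ⟨hsat m (lt_add_one m) a haSat.mem ha',
      fun G hG haG => hab G (htight G hG) haG, hpos b hb⟩, rfl⟩

variable [DecidableEq α]

lemma isFeasible_zero (hg : IsMonoSubmodular F g) (hd : ∀ i, 0 ≤ d i) :
    IsFeasible F g π d 0 where
  nonneg _ := le_rfl
  eq_zero_of_notMem _ _ := rfl
  sum_le G hG := by simpa [hg.1] using hg.2.1 ∅ G (empty_subset G) hG
  sum_fiber_le i := by simpa using hd i

lemma exists_isFeasible_forall_sum_le (hg : IsMonoSubmodular F g) (hd : ∀ i, 0 ≤ d i) :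
    ∃ x, IsFeasible F g π d x ∧ ∀ y, IsFeasible F g π d y → ∑ e ∈ F, y e ≤ ∑ e ∈ F, x e := by
  have hbox : {x : α → ℝ | IsFeasible F g π d x} ⊆ Set.univ.pi fun _ => Set.Icc 0 (g F) := by
    intro x hx e _
    refine ⟨hx.nonneg e, ?_⟩
    by_cases he : e ∈ F
    · exact (single_le_sum (fun a _ => hx.nonneg a) he).trans (hx.sum_le F subset_rfl)
    · simpa [hx.eq_zero_of_notMem e he, hg.1] using hg.2.1 ∅ F (empty_subset F) subset_rfl
  have hcompact := (isCompact_univ_pi fun _ => isCompact_Icc).of_isClosed_subset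
    isClosed_setOf_isFeasible hbox
  obtain ⟨x, hx, hmax⟩ := hcompact.exists_isMaxOn ⟨0, isFeasible_zero hg hd⟩
    (f := fun x : α → ℝ => ∑ e ∈ F, x e) (by fun_prop)
  exact ⟨x, hx, fun y hy => hmax hy⟩

lemma IsTight.inter_union (hg : IsMonoSubmodular F g) (hx : IsFeasible F g π d x)
    {G H : Finset α} (hG : IsTight F g x G) (hH : IsTight F g x H) :
    IsTight F g x (G ∩ H) ∧ IsTight F g x (G ∪ H) := by
  have hGH : G ∪ H ⊆ F := union_subset hG.1 hH.1
  have hsub := hg.2.2 G H hG.1 hH.1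
  have hsum := sum_union_inter (s₁ := G) (s₂ := H) (f := x)
  have hinter := hx.sum_le (G ∩ H) (inter_subset_left.trans hG.1)
  have hunion := hx.sum_le _ hGH
  exact ⟨⟨inter_subset_left.trans hG.1, by linarith [hG.2, hH.2]⟩,
    ⟨hGH, by linarith [hG.2, hH.2]⟩⟩

lemma isTight_sup (hg : IsMonoSubmodular F g) (hx : IsFeasible F g π d x) {β : Type*}
    {s : Finset β} {T : β → Finset α} (hT : ∀ b ∈ s, IsTight F g x (T b)) :
    IsTight F g x (s.sup T) :=
  sup_induction (p := IsTight F g x) ⟨empty_subset F, by simp [hg.1]⟩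
    (fun _ h₁ _ h₂ => (h₁.inter_union hg hx h₂).2) hT

lemma IsSaturated.exists_minimal (hg : IsMonoSubmodular F g) (hx : IsFeasible F g π d x)
    {e : α} (he : IsSaturated F g x e) :
    ∃ T, IsTight F g x T ∧ e ∈ T ∧ ∀ G, IsTight F g x G → e ∈ G → T ⊆ G := by
  classical
  obtain ⟨G₀, hG₀, heG₀⟩ := he
  set 𝒯 := F.powerset.filter fun G => IsTight F g x G ∧ e ∈ G
  have h𝒯 : ∀ G, G ∈ 𝒯 ↔ IsTight F g x G ∧ e ∈ G := fun G => by
    simpa [𝒯] using fun (h : IsTight F g x G) _ => h.1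
  have hne : 𝒯.Nonempty := ⟨G₀, (h𝒯 G₀).2 ⟨hG₀, heG₀⟩⟩
  refine ⟨𝒯.inf' hne id, ?_, ?_, fun G hG heG => inf'_le id ((h𝒯 G).2 ⟨hG, heG⟩)⟩
  · exact inf'_induction hne id (fun _ h₁ _ h₂ => (h₁.inter_union hg hx h₂).1)
      fun G hG => ((h𝒯 G).1 hG).1
  · exact singleton_subset_iff.1
      (le_inf' hne id fun G hG => singleton_subset_iff.2 ((h𝒯 G).1 hG).2)

lemma IsFeasible.exists_slack (hx : IsFeasible F g π d x) {e : α}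
    (he : ¬ IsSaturated F g x e) : ∃ δ > 0, ∀ G ⊆ F, e ∈ G → ∑ a ∈ G, x a + δ ≤ g G := by
  have hslack : ∀ G ∈ F.powerset, ∀ᶠ δ in 𝓝[>] (0 : ℝ), e ∈ G → ∑ a ∈ G, x a + δ ≤ g G := by
    intro G hG
    rw [mem_powerset] at hG
    by_cases heG : e ∈ G
    · have hlt : 0 < g G - ∑ a ∈ G, x a := sub_pos.2 <|
        (hx.sum_le G hG).lt_of_ne fun h => he ⟨G, ⟨hG, h⟩, heG⟩
      filter_upwards [nhdsWithin_le_nhds (Iio_mem_nhds hlt)] with δ hδ _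
      linarith [Set.mem_Iio.1 hδ]
    · exact Eventually.of_forall fun _ h => absurd h heG
  obtain ⟨δ, hδ, hδpos⟩ := (((eventually_all_finset _).2 hslack).and self_mem_nhdsWithin).exists
  exact ⟨δ, hδpos, fun G hG => hδ G (mem_powerset.2 hG)⟩

lemma sum_add_single (x : α → ℝ) (e : α) (δ : ℝ) (G : Finset α) :
    ∑ a ∈ G, (x + Pi.single e δ : α → ℝ) a = ∑ a ∈ G, x a + if e ∈ G then δ else 0 := by
  simp [sum_add_distrib, sum_pi_single']

lemma IsFeasible.sum_le_of_le_add_single (hx : IsFeasible F g π d x) {e : α} {δ : ℝ}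
    (hslack : ∀ G ⊆ F, e ∈ G → ∑ a ∈ G, x a + δ ≤ g G) (hyx : y ≤ x + Pi.single e δ) :
    ∀ G ⊆ F, ∑ a ∈ G, y a ≤ g G := by
  intro G hG
  refine (sum_le_sum fun a _ => hyx a).trans ?_
  rw [sum_add_single]
  split_ifs with heG
  · exact hslack G hG heG
  · simpa using hx.sum_le G hG

lemma IsFeasible.exists_sum_lt (hx : IsFeasible F g π d x) {e : α} (heF : e ∈ F)
    (he : ¬ IsSaturated F g x e) (hdef : ∑ a ∈ F with π a = π e, x a < d (π e)) :
    ∃ y, IsFeasible F g π d y ∧ ∑ a ∈ F, x a < ∑ a ∈ F, y a := by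
  obtain ⟨δ₁, hδ₁, hslack⟩ := hx.exists_slack he
  set δ := min δ₁ (d (π e) - ∑ a ∈ F with π a = π e, x a)
  have hδ : 0 < δ := lt_min hδ₁ (sub_pos.2 hdef)
  refine ⟨x + Pi.single e δ, ⟨fun a => ?_, fun a ha => ?_, ?_, fun i => ?_⟩, ?_⟩
  · exact add_nonneg (hx.nonneg a) ((Pi.single_nonneg.2 hδ.le : (0 : α → ℝ) ≤ Pi.single e δ) a)
  · simp [hx.eq_zero_of_notMem a ha, ne_of_mem_of_not_mem heF ha |>.symm]
  · exact hx.sum_le_of_le_add_single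
      (fun G hG heG => le_trans (by gcongr; exact min_le_left _ _) (hslack G hG heG)) le_rfl
  · rw [sum_add_single]
    split_ifs with hi
    · obtain rfl : π e = i := (mem_filter.1 hi).2
      linarith [min_le_right δ₁ (d (π e) - ∑ a ∈ F with π a = π e, x a)]
    · simpa using hx.sum_fiber_le i
  · rw [sum_add_single, if_pos heF]
    linarith

lemma sum_add_single_sub_single (x : α → ℝ) (e b : α) (δ : ℝ) (G : Finset α) :
    ∑ a ∈ G, (x + Pi.single e δ - Pi.single b δ : α → ℝ) a =
      ∑ a ∈ G, x a + (if e ∈ G then δ else 0) - if b ∈ G then δ else 0 := by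
  simp [sum_add_distrib, sum_sub_distrib, sum_pi_single']

lemma IsFeasible.isTight_of_isTight_exchange (hx : IsFeasible F g π d x) {e b : α} {δ : ℝ}
    (hδ : 0 < δ) (hslack : ∀ G ⊆ F, e ∈ G → ∑ a ∈ G, x a + δ < g G) {G : Finset α}
    (hG : IsTight F g (x + Pi.single e δ - Pi.single b δ) G) : IsTight F g x G ∧ b ∉ G := by
  obtain ⟨hGF, hG⟩ := hG
  rw [sum_add_single_sub_single] at hG
  have hxG := hx.sum_le G hGF
  by_cases heG : e ∈ G
  · have := hslack G hGF heG
    split_ifs at hG <;> linarith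
  by_cases hbG : b ∈ G
  · simp only [heG, hbG, if_false, if_true] at hG
    linarith
  · simp only [heG, hbG, if_false, add_zero, sub_zero] at hG
    exact ⟨⟨hGF, hG⟩, hbG⟩

lemma IsFeasible.exists_exchange (hx : IsFeasible F g π d x) {e b : α} (heF : e ∈ F)
    (he : ¬ IsSaturated F g x e) (hbF : b ∈ F) (hb : 0 < x b) (hπ : π b = π e) :
    ∃ y, IsFeasible F g π d y ∧ ∑ a ∈ F, y a = ∑ a ∈ F, x a ∧
      (∀ i, ∑ a ∈ F with π a = i, y a = ∑ a ∈ F with π a = i, x a) ∧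
      (∀ a, 0 < x a → 0 < y a) ∧ ∀ G, IsTight F g y G → IsTight F g x G ∧ b ∉ G := by
  obtain ⟨δ₁, hδ₁, hslack⟩ := hx.exists_slack he
  set δ := min δ₁ (x b) / 2
  have hδ : 0 < δ := half_pos (lt_min hδ₁ hb)
  have hδδ₁ : δ < δ₁ := (half_lt_self (lt_min hδ₁ hb)).trans_le (min_le_left _ _)
  have hδb : δ < x b := (half_lt_self (lt_min hδ₁ hb)).trans_le (min_le_right _ _)
  set y := x + Pi.single e δ - Pi.single b δ
  have hy : ∀ a, x a ≤ y a ∨ 0 < y a := fun a => by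
    by_cases hab : a = b
    · subst hab
      right
      simp only [y, Pi.sub_apply, Pi.add_apply, Pi.single_apply]
      split_ifs <;> linarith
    · left
      simp only [y, Pi.sub_apply, Pi.add_apply, Pi.single_apply, hab, if_false]
      split_ifs <;> linarith
  have hsum : ∀ G, ∑ a ∈ G, y a =
      ∑ a ∈ G, x a + (if e ∈ G then δ else 0) - if b ∈ G then δ else 0 :=
    sum_add_single_sub_single x e b δ
  have hfiber : ∀ i, ∑ a ∈ F with π a = i, y a = ∑ a ∈ F with π a = i, x a := fun i => by
    simp [hsum, hπ, heF, hbF]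
  refine ⟨y, ⟨fun a => ?_, fun a ha => ?_, ?_, fun i => (hfiber i).trans_le (hx.sum_fiber_le i)⟩,
    by simp [hsum, heF, hbF], hfiber, fun a ha => ?_,
    fun G => hx.isTight_of_isTight_exchange hδ fun G hG heG => by linarith [hslack G hG heG]⟩
  · exact (hy a).elim ((hx.nonneg a).trans) le_of_lt
  · simp [y, hx.eq_zero_of_notMem a ha, ne_of_mem_of_not_mem heF ha |>.symm,
      ne_of_mem_of_not_mem hbF ha |>.symm]
  · refine hx.sum_le_of_le_add_single (e := e) (δ := δ) (fun G hG heG => ?_) fun a => ?_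
    · linarith [hslack G hG heG]
    · simpa [y] using (Pi.single_nonneg.2 hδ.le : (0 : α → ℝ) ≤ Pi.single b δ) a
  · exact (hy a).elim ha.trans_le id

theorem isSaturated_of_reachable (m : ℕ) (hx : IsFeasible F g π d x)
    (hmax : ∀ y, IsFeasible F g π d y → ∑ e ∈ F, y e ≤ ∑ e ∈ F, x e) {e : α} (heF : e ∈ F)
    (hreach : Reachable F g π d x m (π e)) : IsSaturated F g x e := by
  induction m using Nat.strong_induction_on generalizing x e with
  | _ m ih =>
  by_contra he
  cases m with
  | zero =>
    obtain ⟨y, hy, hlt⟩ := hx.exists_sum_lt heF he hreach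
    exact (hmax y hy).not_gt hlt
  | succ m =>
    -- Exchanging along the last arc `a → b` keeps `x` maximal but takes `a` out of every
    -- tight set, while `a` stays reachable in fewer steps.
    obtain ⟨a, b, ha, hab, hπ⟩ := hreach
    obtain ⟨y, hy, hsum, hfiber, hpos, htight⟩ :=
      hx.exists_exchange heF he hab.mem_right hab.2.2 hπ
    have hmaxy : ∀ z, IsFeasible F g π d z → ∑ e ∈ F, z e ≤ ∑ e ∈ F, y e := hsum ▸ hmax
    have hay : Reachable F g π d y m (π a) := ha.of_exchange hfiber (fun G hG => (htight G hG).1)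
      hpos fun k hk c hcF hc => ih k (hk.trans (lt_add_one m)) hy hmaxy hcF hc
    obtain ⟨G, hG, haG⟩ := ih m (lt_add_one m) hy hmaxy hab.1.mem hay
    exact (htight G hG).2 (hab.2.1 G (htight G hG).1 haG)

lemma le_sum_filter_of_isSaturated (hg : IsMonoSubmodular F g) (hx : IsFeasible F g π d x)
    {X : Finset ι} (hsat : ∀ e ∈ F, π e ∈ X → IsSaturated F g x e)
    (hclosed : ∀ a ∈ F, π a ∈ X → ∀ b, IsExchangeArc F g x a b → π b ∈ X) :
    g {e ∈ F | π e ∈ X} ≤ ∑ e ∈ F with π e ∈ X, x e := by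
  set FX := F.filter (π · ∈ X)
  have hmin : ∀ e ∈ FX, ∃ T, IsTight F g x T ∧ e ∈ T ∧
      ∀ G, IsTight F g x G → e ∈ G → T ⊆ G := fun e he =>
    (hsat e (mem_filter.1 he).1 (mem_filter.1 he).2).exists_minimal hg hx
  choose! T hT using hmin
  have hA : IsTight F g x (FX.sup T) := isTight_sup hg hx fun e he => (hT e he).1
  have hFX : FX ⊆ FX.sup T := fun e he => mem_sup.2 ⟨e, he, (hT e he).2.1⟩
  have hzero : ∀ b ∈ FX.sup T, b ∉ FX → x b = 0 := by
    intro b hb hbX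
    obtain ⟨a, ha, hba⟩ := mem_sup.1 hb
    obtain ⟨haF, haX⟩ := mem_filter.1 ha
    refine ((hx.nonneg b).eq_of_not_lt fun hpos => hbX ?_).symm
    exact mem_filter.2 ⟨hA.1 hb, hclosed a haF haX b
      ⟨hsat a haF haX, fun G hG haG => (hT a ha).2.2 G hG haG hba, hpos⟩⟩
  calc g FX ≤ g (FX.sup T) := hg.2.1 _ _ hFX hA.1
    _ = ∑ e ∈ FX.sup T, x e := hA.2.symm
    _ = ∑ e ∈ FX, x e := (sum_subset hFX hzero).symm

theorem exists_isFeasible_cut_le_sum (hg : IsMonoSubmodular F g) (hd : ∀ i, 0 ≤ d i) :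
    ∃ x, IsFeasible F g π d x ∧ ∃ X ⊆ F.image π,
      g {e ∈ F | π e ∈ X} + ∑ i ∈ F.image π \ X, d i ≤ ∑ e ∈ F, x e := by
  classical
  obtain ⟨x, hx, hmax⟩ := exists_isFeasible_forall_sum_le hg hd
  set X := (F.image π).filter fun i => ∃ m, Reachable F g π d x m i
  have hsat : ∀ e ∈ F, π e ∈ X → IsSaturated F g x e := fun e he heX =>
    have ⟨m, hm⟩ := (mem_filter.1 heX).2
    isSaturated_of_reachable m hx hmax he hm
  have hclosed : ∀ a ∈ F, π a ∈ X → ∀ b, IsExchangeArc F g x a b → π b ∈ X := by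
    intro a _ haX b hab
    obtain ⟨m, hm⟩ := (mem_filter.1 haX).2
    exact mem_filter.2 ⟨mem_image_of_mem π hab.mem_right, m + 1, a, b, hm, hab, rfl⟩
  have hfull : ∀ i ∈ F.image π \ X, d i ≤ ∑ e ∈ F with π e = i, x e := fun i hi =>
    not_lt.1 fun h => (mem_sdiff.1 hi).2 (mem_filter.2 ⟨(mem_sdiff.1 hi).1, 0, h⟩)
  refine ⟨x, hx, X, filter_subset _ _, ?_⟩
  rw [← sum_filter_add_sum_filter_not F (π · ∈ X), sum_filter_notMem_eq_sum_fiber]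
  exact add_le_add (le_sum_filter_of_isSaturated hg hx hsat hclosed) (sum_le_sum hfull)

end PolymatroidCapacity

lemma IsMonoSubmodular.subset {α : Type*} [DecidableEq α] {G H : Finset α} {f : Finset α → ℝ}
    (hf : IsMonoSubmodular H f) (hGH : G ⊆ H) : IsMonoSubmodular G f :=
  ⟨hf.1, fun A C hAC hC => hf.2.1 A C hAC (hC.trans hGH),
    fun A C hA hC => hf.2.2 A C (hA.trans hGH) (hC.trans hGH)⟩

lemma filter_inter_eq_filter {α : Type*} [DecidableEq α] {E F : Finset α} {p : α → Prop}
    [DecidablePred p] (hF : F ⊆ E) : E.filter p ∩ F = F.filter p := by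
  rw [filter_inter, inter_eq_right.2 hF]

section Market

omit [Fintype B]

variable {E F G : Finset (B × S)} {fj : S → Finset (B × S) → ℝ} {w x : B × S → ℝ} {d : B → ℝ}

omit [Fintype S] [DecidableEq B] [DecidableEq S] in
lemma vsum_add (x y : B × S → ℝ) (G : Finset (B × S)) :
    vsum (x + y) G = vsum x G + vsum y G :=
  sum_add_distrib

omit [Fintype S] in
lemma vsum_union_add_vsum_inter (x : B × S → ℝ) (G H : Finset (B × S)) :
    vsum x (G ∪ H) + vsum x (G ∩ H) = vsum x G + vsum x H :=
  sum_union_inter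

omit [Fintype S] in
lemma vsum_eq_vsum_inter (hx : ∀ e ∉ F, x e = 0) (G : Finset (B × S)) :
    vsum x G = vsum x (G ∩ F) :=
  (sum_subset inter_subset_left fun e he heF => hx e fun h => heF (mem_inter.2 ⟨he, h⟩)).symm

lemma fTot_eq_of_subset_Ej (hfj : ∀ j, fj j ∅ = 0) {j : S} (hG : G ⊆ Ej E j) :
    fTot E fj G = fj j G := by
  rw [fTot, sum_eq_single j (fun j' _ hj' => ?_) (absurd (mem_univ j)), inter_eq_right.2 hG]
  convert hfj j'
  refine eq_empty_of_forall_notMem fun e he => hj' ?_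
  rw [mem_inter] at he
  exact (mem_filter.1 he.1).2.symm.trans (mem_filter.1 (hG he.2)).2

lemma isMonoSubmodular_fTot (hfj : ∀ j, IsMonoSubmodular (Ej E j) (fj j)) :
    IsMonoSubmodular E (fTot E fj) := by
  refine ⟨by simp [fTot, fun j => (hfj j).1], fun A C hAC _ => ?_, fun A C _ _ => ?_⟩
  · exact sum_le_sum fun j _ => (hfj j).2.1 _ _ (inter_subset_inter_left hAC) inter_subset_left
  · simp only [fTot, ← sum_add_distrib]
    refine sum_le_sum fun j _ => ?_
    rw [inter_inter_distrib_left, inter_union_distrib_left]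
    exact (hfj j).2.2 _ _ inter_subset_left inter_subset_left

lemma vsum_le_fTot_of_memP (hx : memP E fj x) (hG : G ⊆ E) : vsum x G ≤ fTot E fj G := by
  rw [vsum, ← sum_fiberwise G Prod.snd, fTot]
  refine sum_le_sum fun j _ => ?_
  rw [← filter_inter_eq_filter hG]
  exact hx.2.2 j _ inter_subset_left

lemma finite_setOf_fw (G : Finset (B × S)) :
    {r : ℝ | ∃ F', G ⊆ F' ∧ F' ⊆ E ∧ r = fTot E fj F' - vsum w F'}.Finite :=
  (E.powerset.finite_toSet.image fun F' => fTot E fj F' - vsum w F').subset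
    fun _ ⟨F', _, hF'E, hr⟩ => ⟨F', mem_powerset.2 hF'E, hr.symm⟩

lemma fw_le {F' : Finset (B × S)} (hGF' : G ⊆ F') (hF'E : F' ⊆ E) :
    fw E fj w G ≤ fTot E fj F' - vsum w F' :=
  csInf_le (finite_setOf_fw G).bddBelow ⟨F', hGF', hF'E, rfl⟩

lemma exists_fw_eq (hG : G ⊆ E) :
    ∃ F', G ⊆ F' ∧ F' ⊆ E ∧ fw E fj w G = fTot E fj F' - vsum w F' :=
  Set.Nonempty.csInf_mem (s := {r | ∃ F', G ⊆ F' ∧ F' ⊆ E ∧ r = fTot E fj F' - vsum w F'})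
    ⟨_, E, hG, subset_rfl, rfl⟩ (finite_setOf_fw G)

lemma isMonoSubmodular_fw (hf : IsMonoSubmodular E (fTot E fj))
    (hw : ∀ F' ⊆ E, vsum w F' ≤ fTot E fj F') : IsMonoSubmodular E (fw E fj w) := by
  refine ⟨le_antisymm ?_ ?_, fun A C hAC hC => ?_, fun A C hA hC => ?_⟩
  · simpa [hf.1, vsum] using fw_le (fj := fj) (w := w) subset_rfl (empty_subset E)
  · obtain ⟨F', -, hF'E, h⟩ := exists_fw_eq (fj := fj) (w := w) (empty_subset E)
    linarith [hw F' hF'E]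
  · obtain ⟨F', hCF', hF'E, h⟩ := exists_fw_eq (fj := fj) (w := w) hC
    exact h ▸ fw_le (hAC.trans hCF') hF'E
  · obtain ⟨FA, hAFA, hFAE, hA⟩ := exists_fw_eq (fj := fj) (w := w) hA
    obtain ⟨FC, hCFC, hFCE, hC⟩ := exists_fw_eq (fj := fj) (w := w) hC
    have hinter := fw_le (fj := fj) (w := w) (inter_subset_inter hAFA hCFC)
      (inter_subset_left.trans hFAE)
    have hunion := fw_le (fj := fj) (w := w) (union_subset_union hAFA hCFC)
      (union_subset hFAE hFCE)
    linarith [hf.2.2 FA FC hFAE hFCE, vsum_union_add_vsum_inter w FA FC]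

lemma vsum_le_fw_of_memPwd (hx : memPwd E fj w d x) (hG : G ⊆ E) :
    vsum x G ≤ fw E fj w G := by
  obtain ⟨F', hGF', hF'E, h⟩ := exists_fw_eq (fj := fj) (w := w) hG
  have hwx := vsum_le_fTot_of_memP hx.2.2.1 hF'E
  rw [vsum_add] at hwx
  have hxG : vsum x G ≤ vsum x F' := sum_le_sum_of_subset_of_nonneg hGF' fun e _ _ => hx.1 e
  linarith

lemma isFeasible_piecewise_of_memPwd (hF : F ⊆ E) (hx : memPwd E fj w d x) :
    IsFeasible F (fw E fj w) Prod.fst d (F.piecewise x 0) where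
  nonneg e := by by_cases he : e ∈ F <;> simp [he, hx.1 e]
  eq_zero_of_notMem e he := by simp [he]
  sum_le G hG := by
    rw [sum_congr rfl fun e he => piecewise_eq_of_mem F x 0 (hG he)]
    exact vsum_le_fw_of_memPwd hx (hG.trans hF)
  sum_fiber_le i := by
    rw [sum_congr rfl fun e he => piecewise_eq_of_mem F x 0 (mem_filter.1 he).1]
    refine le_trans ?_ (hx.2.2.2 i)
    exact sum_le_sum_of_subset_of_nonneg (filter_subset_filter _ hF) fun e _ _ => hx.1 e

lemma memPwd_of_isFeasible (hfj : ∀ j, IsMonoSubmodular (Ej E j) (fj j)) (hw : memP E fj w)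
    (hF : F ⊆ E) (hx : IsFeasible F (fw E fj w) Prod.fst d x) : memPwd E fj w d x := by
  have hxE : ∀ e ∉ E, x e = 0 := fun e he => hx.eq_zero_of_notMem e fun h => he (hF h)
  refine ⟨hx.nonneg, hxE, ⟨fun e => add_nonneg (hw.1 e) (hx.nonneg e),
    fun e he => by simp [hw.2.1 e he, hxE e he], fun j G hG => ?_⟩, fun i => ?_⟩
  · calc vsum (w + x) G = vsum w G + vsum x (G ∩ F) := by
          rw [vsum_add, ← vsum_eq_vsum_inter hx.eq_zero_of_notMem]
      _ ≤ vsum w G + (fTot E fj G - vsum w G) := by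
          gcongr
          exact (hx.sum_le _ inter_subset_right).trans
            (fw_le inter_subset_left (hG.trans (filter_subset _ _)))
      _ = fj j G := by
          rw [fTot_eq_of_subset_Ej (fun j => (hfj j).1) hG]
          ring
  · rw [vsum_eq_vsum_inter hx.eq_zero_of_notMem, Ei, filter_inter_eq_filter hF]
    exact hx.sum_fiber_le i

end Market

/-- `f_{w,d}(F) = min_{X ⊆ N_F} (f_w(E_X ∩ F) + d(N_F \ X))`. -/
theorem fwd_min_formula
    (E : Finset (B × S)) (fj : S → Finset (B × S) → ℝ)
    (hfj : ∀ j : S, IsMonoSubmodular (Ej E j) (fj j))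
    (w : B × S → ℝ) (hw : memP E fj w)
    (d : B → ℝ) (hd : ∀ i : B, 0 ≤ d i)
    (F : Finset (B × S)) (hF : F ⊆ E) :
    fwd E fj w d F =
      (NF F).powerset.inf' ⟨∅, Finset.empty_mem_powerset _⟩
        (fun X => fw E fj w (EX E X ∩ F) + ∑ k ∈ NF F \ X, d k) := by
  have hfw : IsMonoSubmodular F (fw E fj w) :=
    (isMonoSubmodular_fw (isMonoSubmodular_fTot hfj)
      fun _ hF' => vsum_le_fTot_of_memP hw hF').subset hF
  have hEX : ∀ X, EX E X ∩ F = {e ∈ F | e.1 ∈ X} := fun X => filter_inter_eq_filter hF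
  have hcut : ∀ y, memPwd E fj w d y → ∀ X,
      vsum y F ≤ fw E fj w (EX E X ∩ F) + ∑ k ∈ NF F \ X, d k := fun y hy X => by
    rw [hEX, vsum, ← sum_congr rfl fun e he => piecewise_eq_of_mem F y 0 he]
    exact (isFeasible_piecewise_of_memPwd hF hy).sum_le_cut X
  obtain ⟨x, hx, X, hXF, hX⟩ := exists_isFeasible_cut_le_sum (π := Prod.fst) hfw hd
  rw [← hEX] at hX
  have hxP : memPwd E fj w d x := memPwd_of_isFeasible hfj hw hF hx
  have hgreatest : IsGreatest {r | ∃ y, memPwd E fj w d y ∧ r = vsum y F} (vsum x F) :=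
    ⟨⟨x, hxP, rfl⟩, fun _ ⟨y, hy, hr⟩ => hr ▸ (hcut y hy X).trans hX⟩
  rw [fwd, hgreatest.csSup_eq]
  exact le_antisymm (le_inf' _ _ fun X _ => hcut x hxP X)
    ((inf'_le _ (mem_powerset.2 hXF)).trans hX)

end TwoSidedMarket
end
end

section
/- Let i ∈ N be a buyer and ξ ∈ ℝ_{≥0}^{E_i}, and define h^i_ξ : 2^{N−i} → ℝ by h^i_ξ(Y) := min_{F ⊆ E_i} ( f_{w,d}(E_Y ∪ F) − ξ(F) ). Then P^i_{w,d}(ξ) is nonempty if and only if h^i_ξ(Y) ≥ 0 for every Y ⊆ N−i; and in this case h^i_ξ is monotone submodular on N−i and P^i_{w,d}(ξ) coincides with the polymatroid associated with h^i_ξ, i.e., P^i_{w,d}(ξ) = {u ∈ ℝ_{≥0}^{N−i} : u(Y) ≤ h^i_ξ(Y) for all Y ⊆ N−i}. -/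
open Finset

noncomputable section

namespace TwoSidedMarket

variable {B S : Type*} [Fintype B] [Fintype S] [DecidableEq B] [DecidableEq S]

/-!
Once `ξ` is fixed, the supply left for the other buyers is the polymatroid of `f_w` contracted
by `ξ`. Aggregating a polymatroid along the partition `{E_k}` of its ground set gives a
polymatroid again, with rank `Z ↦ r(E_Z)`: realise the prescribed total on one block by the
greedy algorithm applied to a suitably contracted rank function, contract by it, and recurse.
Capping the totals by `d` replaces this rank by `Y ↦ min_{Z ⊆ Y} (r(E_Z) + d(Y \ Z))`. Hence,
when `ξ` is feasible (which is `h^i_ξ(∅) ≥ 0`), `P^i_{w,d}(ξ)` is the polymatroid of this explicit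
monotone submodular function, and comparing it with `h^i_ξ` in both directions (a greedy point of
the polymatroid for one of them) shows that the two functions coincide.
-/

section Polymatroid

variable {α ι : Type*} [DecidableEq α]

theorem sum_inter_eq_of_eq_zero {x : α → ℝ} {A : Finset α} (hx : ∀ a ∉ A, x a = 0)
    (F : Finset α) : ∑ a ∈ F ∩ A, x a = ∑ a ∈ F, x a :=
  sum_subset inter_subset_left fun a haF ha => hx a fun haA => ha (mem_inter.2 ⟨haF, haA⟩)

theorem IsMonoSubmodularWeak.le_of_empty_eq_zero {G : Finset α} {q : Finset α → ℝ}
    (hq : IsMonoSubmodularWeak G q) (h0 : q ∅ = 0) {F : Finset α} (hF : F ⊆ G) : 0 ≤ q F :=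
  h0 ▸ hq.1 ∅ F (empty_subset F) hF

theorem IsMonoSubmodularWeak.isMonoSubmodular_of_eqOn {G : Finset α}
    {f q : Finset α → ℝ} (hq : IsMonoSubmodularWeak G q) (h0 : q ∅ = 0)
    (hfq : ∀ Y ⊆ G, f Y = q Y) : IsMonoSubmodular G f := by
  refine ⟨(hfq ∅ (empty_subset G)).trans h0, fun A A' hAA' hA' => ?_, fun A A' hA hA' => ?_⟩
  · rw [hfq A (hAA'.trans hA'), hfq A' hA']
    exact hq.1 A A' hAA' hA'
  · rw [hfq A hA, hfq A' hA', hfq _ (inter_subset_left.trans hA), hfq _ (union_subset hA hA')]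
    exact hq.2 A A' hA hA'

/-- The greedy algorithm: adding the elements of `A` one at a time, each with its marginal
value, gives a point of the polymatroid that is tight on `A`. -/
theorem IsMonoSubmodularWeak.exists_tight {G : Finset α} {q : Finset α → ℝ}
    (hq : IsMonoSubmodularWeak G q) (h0 : q ∅ = 0) {A : Finset α} (hA : A ⊆ G) :
    ∃ x : α → ℝ, (∀ a, 0 ≤ x a) ∧ (∀ a ∉ A, x a = 0) ∧
      (∀ F ⊆ G, ∑ a ∈ F, x a ≤ q F) ∧ ∑ a ∈ A, x a = q A := by
  induction A using Finset.induction_on with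
  | empty =>
    exact ⟨0, fun _ => le_rfl, fun _ _ => rfl,
      fun F hF => by simpa using hq.le_of_empty_eq_zero h0 hF, by simp [h0]⟩
  | @insert e A he ih =>
    have hAG : A ⊆ G := (subset_insert e A).trans hA
    obtain ⟨x, hx0, hxA, hxq, hxeq⟩ := ih hAG
    set c := q (insert e A) - q A
    have hc : 0 ≤ c := sub_nonneg.2 (hq.1 _ _ (subset_insert e A) hA)
    have hsum : ∀ F : Finset α, ∑ a ∈ F, (x + Pi.single e c : α → ℝ) a =
        ∑ a ∈ F, x a + if e ∈ F then c else 0 := fun F => by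
      simp only [Pi.add_apply, sum_add_distrib, sum_pi_single']
    refine ⟨x + Pi.single e c, fun a => ?_, fun a ha => ?_, fun F hF => ?_, ?_⟩
    · rcases eq_or_ne a e with rfl | h <;> simp [*]
    · have hae : a ≠ e := fun h => ha (h ▸ mem_insert_self e A)
      simp [hae, hxA a fun h => ha (mem_insert_of_mem h)]
    · rw [hsum]
      split_ifs with heF
      · have hsub := hq.2 F A hF hAG
        have hmono : q (insert e A) ≤ q (F ∪ A) :=
          hq.1 _ _ (insert_subset (mem_union_left A heF) subset_union_right) (union_subset hF hAG)
        have hxF : ∑ a ∈ F, x a ≤ q (F ∩ A) := by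
          rw [← sum_inter_eq_of_eq_zero hxA F]
          exact hxq _ (inter_subset_left.trans hF)
        linarith
      · simpa using hxq F hF
    · rw [hsum, sum_insert he, if_pos (mem_insert_self e A), hxA e he, hxeq]
      ring

theorem IsMonoSubmodularWeak.exists_sum_eq {G : Finset α} {q : Finset α → ℝ}
    (hq : IsMonoSubmodularWeak G q) (h0 : q ∅ = 0) {A : Finset α} (hA : A ⊆ G) {c : ℝ}
    (hc0 : 0 ≤ c) (hcA : c ≤ q A) :
    ∃ x : α → ℝ, (∀ a, 0 ≤ x a) ∧ (∀ a ∉ A, x a = 0) ∧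
      (∀ F ⊆ G, ∑ a ∈ F, x a ≤ q F) ∧ ∑ a ∈ A, x a = c := by
  obtain ⟨x, hx0, hxA, hxq, hxeq⟩ := hq.exists_tight h0 hA
  have ht0 : 0 ≤ c / q A := div_nonneg hc0 (hc0.trans hcA)
  have ht1 : c / q A ≤ 1 := div_le_one_of_le₀ hcA (hc0.trans hcA)
  refine ⟨fun a => c / q A * x a, fun a => mul_nonneg ht0 (hx0 a), fun a ha => by simp [hxA a ha],
    fun F hF => ?_, ?_⟩
  · rw [← mul_sum]
    exact (mul_le_of_le_one_left (sum_nonneg fun a _ => hx0 a) ht1).trans (hxq F hF)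
  · rw [← mul_sum, hxeq]
    exact div_mul_cancel_of_imp fun h => le_antisymm (h ▸ hcA) hc0

/-- For `T = id`, `shiftMin p id ξ A` is the contraction of `p` by the vector `ξ` living on `A`. -/
def shiftMin (p : Finset α → ℝ) (T : Finset ι → Finset α) (c : ι → ℝ) (I : Finset ι)
    (F : Finset α) : ℝ :=
  I.powerset.inf' ⟨∅, empty_mem_powerset I⟩ fun Z => p (F ∪ T Z) - ∑ k ∈ Z, c k

section shiftMin

variable {p : Finset α → ℝ} {T : Finset ι → Finset α} {c : ι → ℝ} {I : Finset ι}
  {F : Finset α}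

theorem shiftMin_le {Z : Finset ι} (hZ : Z ⊆ I) :
    shiftMin p T c I F ≤ p (F ∪ T Z) - ∑ k ∈ Z, c k :=
  inf'_le _ (mem_powerset.2 hZ)

theorem le_shiftMin {r : ℝ} (h : ∀ Z ⊆ I, r ≤ p (F ∪ T Z) - ∑ k ∈ Z, c k) :
    r ≤ shiftMin p T c I F :=
  le_inf' _ _ fun Z hZ => h Z (mem_powerset.1 hZ)

theorem exists_shiftMin_eq (p : Finset α → ℝ) (T : Finset ι → Finset α) (c : ι → ℝ)
    (I : Finset ι) (F : Finset α) :
    ∃ Z ⊆ I, shiftMin p T c I F = p (F ∪ T Z) - ∑ k ∈ Z, c k := by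
  obtain ⟨Z, hZ, h⟩ := exists_mem_eq_inf' ⟨∅, empty_mem_powerset I⟩
    fun Z => p (F ∪ T Z) - ∑ k ∈ Z, c k
  exact ⟨Z, mem_powerset.1 hZ, h⟩

variable [DecidableEq ι]

theorem IsMonoSubmodularWeak.shiftMin {G D : Finset α} (hp : IsMonoSubmodularWeak G p)
    (hD : D ⊆ G) (hTG : ∀ Z ⊆ I, T Z ⊆ G) (hTD : ∀ Z ⊆ I, Disjoint D (T Z))
    (hinter : ∀ Z Z', T (Z ∩ Z') = T Z ∩ T Z') (hunion : ∀ Z Z', T (Z ∪ Z') = T Z ∪ T Z') :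
    IsMonoSubmodularWeak D (shiftMin p T c I) := by
  constructor
  · intro X Y hXY hYD
    obtain ⟨Z, hZ, hYeq⟩ := exists_shiftMin_eq p T c I Y
    have := hp.1 _ _ (union_subset_union_left hXY) (union_subset (hYD.trans hD) (hTG Z hZ))
    linarith [shiftMin_le (p := p) (T := T) (c := c) (F := X) hZ]
  · intro X Y hXD hYD
    obtain ⟨ZX, hZX, hXeq⟩ := exists_shiftMin_eq p T c I X
    obtain ⟨ZY, hZY, hYeq⟩ := exists_shiftMin_eq p T c I Y
    have hinter' : (X ∪ T ZX) ∩ (Y ∪ T ZY) = X ∩ Y ∪ T (ZX ∩ ZY) := by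
      ext a
      have hX : a ∈ X → a ∉ T ZY := fun ha => disjoint_left.1 (hTD ZY hZY) (hXD ha)
      have hY : a ∈ Y → a ∉ T ZX := fun ha => disjoint_left.1 (hTD ZX hZX) (hYD ha)
      simp only [hinter, mem_inter, mem_union]
      tauto
    have hunion' : (X ∪ T ZX) ∪ (Y ∪ T ZY) = X ∪ Y ∪ T (ZX ∪ ZY) := by
      rw [hunion]; ac_rfl
    have hsub := hp.2 _ _ (union_subset (hXD.trans hD) (hTG ZX hZX))
      (union_subset (hYD.trans hD) (hTG ZY hZY))
    rw [hinter', hunion'] at hsub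
    have hI := shiftMin_le (p := p) (T := T) (c := c) (F := X ∩ Y) (Z := ZX ∩ ZY)
      (inter_subset_left.trans hZX)
    have hU := shiftMin_le (p := p) (T := T) (c := c) (F := X ∪ Y) (union_subset hZX hZY)
    have hc := sum_union_inter (s₁ := ZX) (s₂ := ZY) (f := c)
    linarith

end shiftMin

section contraction

variable {p : Finset α → ℝ} {A : Finset α} {ξ : α → ℝ}

theorem shiftMin_id_empty (h0 : p ∅ = 0) (hξ : ∀ F ⊆ A, ∑ a ∈ F, ξ a ≤ p F) :
    shiftMin p id ξ A ∅ = 0 := by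
  refine le_antisymm ?_ (le_shiftMin fun F hF => by simpa using hξ F hF)
  simpa [h0] using shiftMin_le (p := p) (T := id) (c := ξ) (F := ∅) (empty_subset A)

theorem sum_add_le_of_le_shiftMin {G : Finset α} {y : α → ℝ} (hyA : ∀ a ∈ A, y a = 0)
    (hξA : ∀ a ∉ A, ξ a = 0) (hyp : ∀ F ⊆ G \ A, ∑ a ∈ F, y a ≤ shiftMin p id ξ A F)
    {H : Finset α} (hH : H ⊆ G) : ∑ a ∈ H, (y a + ξ a) ≤ p H := by
  have hmin := shiftMin_le (p := p) (T := id) (c := ξ) (F := H \ A) (Z := H ∩ A)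
    inter_subset_right
  rw [id, sdiff_union_inter] at hmin
  have hy : ∑ a ∈ H \ A, y a = ∑ a ∈ H, y a :=
    sum_subset sdiff_subset fun a haH ha => hyA a (by simpa [haH] using ha)
  have hyH := hyp _ (sdiff_subset_sdiff hH subset_rfl)
  rw [sum_add_distrib, ← sum_inter_eq_of_eq_zero hξA H]
  linarith

end contraction

section comp

variable [DecidableEq ι] {p : Finset α → ℝ} {T : Finset ι → Finset α}

theorem IsMonoSubmodularWeak.comp {D : Finset α} {G : Finset ι} (hp : IsMonoSubmodularWeak D p)
    (hTD : ∀ Z ⊆ G, T Z ⊆ D) (hinter : ∀ Z Z', T (Z ∩ Z') = T Z ∩ T Z')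
    (hunion : ∀ Z Z', T (Z ∪ Z') = T Z ∪ T Z') :
    IsMonoSubmodularWeak G fun Z => p (T Z) := by
  refine ⟨fun Z Z' hZZ' hZ' => hp.1 _ _ ?_ (hTD Z' hZ'), fun Z Z' hZ hZ' => ?_⟩
  · rw [← union_eq_right.2 hZZ', hunion]
    exact subset_union_left
  · simpa only [hinter, hunion] using hp.2 _ _ (hTD Z hZ) (hTD Z' hZ')

end comp

theorem sum_add_sum_le_sum_add_sum {d : α → ℝ} (hd : ∀ a, 0 ≤ d a) {P Q P' Q' : Finset α}
    (hunion : P ∪ Q ⊆ P' ∪ Q') (hinter : P ∩ Q ⊆ P' ∩ Q') :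
    ∑ a ∈ P, d a + ∑ a ∈ Q, d a ≤ ∑ a ∈ P', d a + ∑ a ∈ Q', d a := by
  rw [← sum_union_inter, ← sum_union_inter (s₁ := P')]
  exact add_le_add (sum_le_sum_of_subset_of_nonneg hunion fun a _ _ => hd a)
    (sum_le_sum_of_subset_of_nonneg hinter fun a _ _ => hd a)

/-- The rank function of the polymatroid of `q` cut down by the box `x ≤ d`. -/
def infConv (q : Finset α → ℝ) (d : α → ℝ) (Y : Finset α) : ℝ :=
  Y.powerset.inf' ⟨∅, empty_mem_powerset Y⟩ fun Z => q Z + ∑ a ∈ Y \ Z, d a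

section infConv

variable {q : Finset α → ℝ} {d : α → ℝ}

theorem infConv_le {Y Z : Finset α} (hZ : Z ⊆ Y) : infConv q d Y ≤ q Z + ∑ a ∈ Y \ Z, d a :=
  inf'_le _ (mem_powerset.2 hZ)

theorem exists_infConv_eq (q : Finset α → ℝ) (d : α → ℝ) (Y : Finset α) :
    ∃ Z ⊆ Y, infConv q d Y = q Z + ∑ a ∈ Y \ Z, d a := by
  obtain ⟨Z, hZ, h⟩ := exists_mem_eq_inf' ⟨∅, empty_mem_powerset Y⟩
    fun Z => q Z + ∑ a ∈ Y \ Z, d a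
  exact ⟨Z, mem_powerset.1 hZ, h⟩

theorem infConv_le_self (Y : Finset α) : infConv q d Y ≤ q Y := by
  simpa using infConv_le (q := q) (d := d) (subset_refl Y)

theorem infConv_singleton_le (h0 : q ∅ = 0) (a : α) : infConv q d {a} ≤ d a := by
  simpa [h0] using infConv_le (q := q) (d := d) (empty_subset {a})

theorem infConv_empty (h0 : q ∅ = 0) : infConv q d ∅ = 0 := by
  obtain ⟨Z, hZ, h⟩ := exists_infConv_eq q d ∅
  simpa [subset_empty.1 hZ, h0] using h

theorem IsMonoSubmodularWeak.infConv {G : Finset α} (hq : IsMonoSubmodularWeak G q)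
    (hd : ∀ a, 0 ≤ d a) : IsMonoSubmodularWeak G (infConv q d) := by
  constructor
  · intro Y Y' hYY' hY'
    obtain ⟨Z, hZ, hY'eq⟩ := exists_infConv_eq q d Y'
    have hq' := hq.1 (Z ∩ Y) Z inter_subset_left (hZ.trans hY')
    have hd' : ∑ a ∈ Y \ (Z ∩ Y), d a ≤ ∑ a ∈ Y' \ Z, d a :=
      sum_le_sum_of_subset_of_nonneg (by intro a; simp only [mem_sdiff, mem_inter]; grind)
        fun a _ _ => hd a
    linarith [infConv_le (q := q) (d := d) (inter_subset_right (s₁ := Z) (s₂ := Y))]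
  · intro Y Y' hY hY'
    obtain ⟨Z, hZ, hYeq⟩ := exists_infConv_eq q d Y
    obtain ⟨Z', hZ', hY'eq⟩ := exists_infConv_eq q d Y'
    have hI := infConv_le (q := q) (d := d) (inter_subset_inter hZ hZ')
    have hU := infConv_le (q := q) (d := d) (union_subset_union hZ hZ')
    have hsub := hq.2 _ _ (hZ.trans hY) (hZ'.trans hY')
    have hd' := sum_add_sum_le_sum_add_sum hd (P := (Y ∩ Y') \ (Z ∩ Z'))
      (Q := (Y ∪ Y') \ (Z ∪ Z')) (P' := Y \ Z) (Q' := Y' \ Z')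
      (by intro a; simp only [mem_union, mem_sdiff, mem_inter]; tauto)
      (by intro a; simp only [mem_union, mem_sdiff, mem_inter]; tauto)
    linarith

end infConv

theorem IsMonoSubmodularWeak.sum {κ : Type*} {G : Finset α} {s : Finset κ}
    {q : κ → Finset α → ℝ} (hq : ∀ j ∈ s, IsMonoSubmodularWeak G (q j)) :
    IsMonoSubmodularWeak G fun F => ∑ j ∈ s, q j F := by
  refine ⟨fun A A' hAA' hA' => sum_le_sum fun j hj => (hq j hj).1 A A' hAA' hA',
    fun A A' hA hA' => ?_⟩
  rw [← sum_add_distrib, ← sum_add_distrib]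
  exact sum_le_sum fun j hj => (hq j hj).2 A A' hA hA'

def upMin (G : Finset α) (g : Finset α → ℝ) (F : Finset α) : ℝ :=
  (G.powerset.filter fun F' => F ∩ G ⊆ F').inf'
    ⟨G, mem_filter.2 ⟨mem_powerset_self G, inter_subset_right⟩⟩ g

section upMin

variable {G : Finset α} {g : Finset α → ℝ}

theorem upMin_le {F F' : Finset α} (hF' : F' ⊆ G) (hFF' : F ∩ G ⊆ F') : upMin G g F ≤ g F' :=
  inf'_le _ (mem_filter.2 ⟨mem_powerset.2 hF', hFF'⟩)

theorem le_upMin {F : Finset α} {r : ℝ} (h : ∀ F' ⊆ G, F ∩ G ⊆ F' → r ≤ g F') :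
    r ≤ upMin G g F :=
  le_inf' _ _ fun F' hF' => h F' (mem_powerset.1 (mem_filter.1 hF').1) (mem_filter.1 hF').2

theorem exists_upMin_eq (G : Finset α) (g : Finset α → ℝ) (F : Finset α) :
    ∃ F' ⊆ G, F ∩ G ⊆ F' ∧ upMin G g F = g F' := by
  obtain ⟨F', hF', h⟩ := exists_mem_eq_inf' (s := G.powerset.filter fun F' => F ∩ G ⊆ F')
    ⟨G, mem_filter.2 ⟨mem_powerset_self G, inter_subset_right⟩⟩ g
  exact ⟨F', mem_powerset.1 (mem_filter.1 hF').1, (mem_filter.1 hF').2, h⟩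

theorem isMonoSubmodularWeak_upMin
    (hg : ∀ A B, A ⊆ G → B ⊆ G → g (A ∩ B) + g (A ∪ B) ≤ g A + g B) (D : Finset α) :
    IsMonoSubmodularWeak D (upMin G g) := by
  constructor
  · intro F F' hFF' _
    obtain ⟨H, hHG, hFH, heq⟩ := exists_upMin_eq G g F'
    exact heq ▸ upMin_le hHG ((inter_subset_inter_right hFF').trans hFH)
  · intro F F' _ _
    obtain ⟨H, hHG, hFH, heq⟩ := exists_upMin_eq G g F
    obtain ⟨H', hH'G, hFH', heq'⟩ := exists_upMin_eq G g F'
    have hI : upMin G g (F ∩ F') ≤ g (H ∩ H') := upMin_le (inter_subset_left.trans hHG)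
      (by intro a; simp only [mem_inter]; intro h; exact ⟨hFH (by simp [h]), hFH' (by simp [h])⟩)
    have hU : upMin G g (F ∪ F') ≤ g (H ∪ H') := upMin_le (union_subset hHG hH'G)
      (by rw [union_inter_distrib_right]; exact union_subset_union hFH hFH')
    linarith [hg H H' hHG hH'G]

end upMin

section fibres

variable {β : Type*} [DecidableEq β] {π : α → β} {G : Finset α} {p : Finset α → ℝ} {u : β → ℝ}

theorem filter_mem_inter (G : Finset α) (π : α → β) (Z Z' : Finset β) :
    G.filter (fun a => π a ∈ Z ∩ Z') =
      G.filter (fun a => π a ∈ Z) ∩ G.filter (fun a => π a ∈ Z') := by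
  simp only [mem_inter, filter_and]

theorem filter_mem_union (G : Finset α) (π : α → β) (Z Z' : Finset β) :
    G.filter (fun a => π a ∈ Z ∪ Z') =
      G.filter (fun a => π a ∈ Z) ∪ G.filter (fun a => π a ∈ Z') := by
  simp only [mem_union, filter_or]

theorem exists_fibre_vector (hp : IsMonoSubmodularWeak G p) (hp0 : p ∅ = 0) {k : β}
    {K : Finset β} (hk : k ∉ K) (huk : 0 ≤ u k)
    (hu : ∀ Z ⊆ insert k K, ∑ m ∈ Z, u m ≤ p (G.filter fun a => π a ∈ Z)) :
    ∃ ξ : α → ℝ, (∀ a, 0 ≤ ξ a) ∧ (∀ a ∉ G.filter (fun a => π a = k), ξ a = 0) ∧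
      ∑ a ∈ G.filter (fun a => π a = k), ξ a = u k ∧
      ∀ Z ⊆ K, ∑ m ∈ Z, u m ≤
        shiftMin p id ξ (G.filter fun a => π a = k) (G.filter fun a => π a ∈ Z) := by
  set A := G.filter fun a => π a = k
  -- `ξ ∈ P(q)` says exactly that `u` stays dominated on `K` after contracting by `ξ`.
  set q := shiftMin p (fun Z => G.filter fun a => π a ∈ Z) u K
  have hq : IsMonoSubmodularWeak A q :=
    hp.shiftMin (filter_subset _ G) (fun _ _ => filter_subset _ G)
      (fun Z hZ => disjoint_filter.2 fun a _ hak haZ => hk (hak ▸ hZ haZ))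
      (filter_mem_inter G π) (filter_mem_union G π)
  have hq0 : q ∅ = 0 := by
    refine le_antisymm ?_ (le_shiftMin fun Z hZ => ?_)
    · simpa [hp0] using shiftMin_le (p := p) (T := fun Z => G.filter fun a => π a ∈ Z) (c := u)
        (F := ∅) (empty_subset K)
    · simpa using hu Z (hZ.trans (subset_insert k K))
  have hukA : u k ≤ q A := le_shiftMin fun Z hZ => by
    have hkZ : k ∉ Z := fun h => hk (hZ h)
    have hkZu := hu (insert k Z) (insert_subset_insert k hZ)
    have hins : G.filter (fun a => π a ∈ insert k Z) = A ∪ G.filter fun a => π a ∈ Z := by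
      rw [insert_eq, filter_mem_union]
      simp [A]
    rw [sum_insert hkZ, hins] at hkZu
    linarith
  obtain ⟨ξ, hξ0, hξA, hξq, hξsum⟩ := hq.exists_sum_eq hq0 subset_rfl huk hukA
  refine ⟨ξ, hξ0, hξA, hξsum, fun Z hZ => le_shiftMin fun F hF => ?_⟩
  have hξF := (hξq F hF).trans (shiftMin_le hZ)
  rw [id, union_comm]
  linarith

theorem exists_fibre_sums_eq (K : Finset β) (hp : IsMonoSubmodularWeak G p) (hp0 : p ∅ = 0)
    (hu0 : ∀ k ∈ K, 0 ≤ u k) (hu : ∀ Z ⊆ K, ∑ k ∈ Z, u k ≤ p (G.filter fun a => π a ∈ Z)) :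
    ∃ x : α → ℝ, (∀ a, 0 ≤ x a) ∧ (∀ a ∉ G, x a = 0) ∧ (∀ F ⊆ G, ∑ a ∈ F, x a ≤ p F) ∧
      ∀ k ∈ K, ∑ a ∈ G.filter (fun a => π a = k), x a = u k := by
  induction K using Finset.induction_on generalizing G p with
  | empty =>
    exact ⟨0, fun _ => le_rfl, fun _ _ => rfl,
      fun F hF => by simpa using hp.le_of_empty_eq_zero hp0 hF, by simp⟩
  | @insert k K hk ih =>
    obtain ⟨ξ, hξ0, hξA, hξsum, hξu⟩ :=
      exists_fibre_vector hp hp0 hk (hu0 k (mem_insert_self k K)) hu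
    set A := G.filter fun a => π a = k
    have hξp : ∀ F ⊆ A, ∑ a ∈ F, ξ a ≤ p F := fun F hF => by
      simpa using (hξu ∅ (empty_subset K)).trans (shiftMin_le hF)
    have hfilter : ∀ Z ⊆ K, (G \ A).filter (fun a => π a ∈ Z) = G.filter fun a => π a ∈ Z :=
      fun Z hZ => by
        ext a
        simp only [A, mem_filter, mem_sdiff]
        exact ⟨fun h => ⟨h.1.1, h.2⟩, fun h => ⟨⟨h.1, fun h' => hk (h'.2 ▸ hZ h.2)⟩, h.2⟩⟩
    obtain ⟨y, hy0, hyG, hyp, hyu⟩ := ih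
      (hp.shiftMin sdiff_subset (fun _ hZ => hZ.trans (filter_subset _ G))
        (fun _ hZ => disjoint_of_subset_right hZ sdiff_disjoint) (fun _ _ => rfl) fun _ _ => rfl)
      (shiftMin_id_empty hp0 hξp) (fun m hm => hu0 m (mem_insert_of_mem hm))
      fun Z hZ => hfilter Z hZ ▸ hξu Z hZ
    have hyA : ∀ a ∈ A, y a = 0 := fun a ha => hyG a fun h => (mem_sdiff.1 h).2 ha
    refine ⟨fun a => y a + ξ a, fun a => add_nonneg (hy0 a) (hξ0 a), fun a ha => ?_,
      fun F hF => sum_add_le_of_le_shiftMin hyA hξA hyp hF, fun m hm => ?_⟩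
    · show y a + ξ a = 0
      rw [hyG a fun h => ha (mem_sdiff.1 h).1, hξA a fun h => ha (mem_filter.1 h).1, add_zero]
    rw [sum_add_distrib]
    rcases mem_insert.1 hm with rfl | hm
    · rw [sum_eq_zero hyA, hξsum, zero_add]
    · have hmk : m ≠ k := fun h => hk (h ▸ hm)
      have hξm : ∑ a ∈ G.filter (fun a => π a = m), ξ a = 0 :=
        sum_eq_zero fun a ha =>
          hξA a fun h => hmk ((mem_filter.1 ha).2.symm.trans (mem_filter.1 h).2)
      rw [hξm, add_zero, ← hyu m hm]
      congr 1
      ext a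
      simp only [mem_filter, mem_sdiff]
      grind

end fibres

end Polymatroid

section Blocks

variable {B S : Type*} [DecidableEq B] {E : Finset (B × S)}

theorem Ei_subset (E : Finset (B × S)) (i : B) : Ei E i ⊆ E := filter_subset _ E

theorem EX_empty (E : Finset (B × S)) : EX E ∅ = ∅ := filter_false_of_mem fun _ _ => notMem_empty _

theorem disjoint_EX_Ei {i : B} {Z : Finset B} (hi : i ∉ Z) : Disjoint (EX E Z) (Ei E i) :=
  disjoint_left.2 fun _ hZ hi' => hi ((mem_filter.1 hi').2 ▸ (mem_filter.1 hZ).2)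

theorem vsum_EX (x : B × S → ℝ) (Z : Finset B) :
    vsum x (EX E Z) = ∑ m ∈ Z, vsum x (Ei E m) := by
  rw [vsum, EX, ← sum_fiberwise_of_maps_to (g := Prod.fst) (t := Z) fun e he => (mem_filter.1 he).2]
  refine sum_congr rfl fun m hm => ?_
  rw [vsum, Ei, filter_filter]
  exact sum_congr (filter_congr fun e _ => by grind) fun _ _ => rfl

variable [DecidableEq S]

theorem EX_inter (Z Z' : Finset B) : EX E (Z ∩ Z') = EX E Z ∩ EX E Z' :=
  filter_mem_inter E Prod.fst Z Z'

theorem EX_union (Z Z' : Finset B) : EX E (Z ∪ Z') = EX E Z ∪ EX E Z' :=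
  filter_mem_union E Prod.fst Z Z'

theorem EX_subset_sdiff_Ei {i : B} {Z : Finset B} (hi : i ∉ Z) : EX E Z ⊆ E \ Ei E i :=
  subset_sdiff.2 ⟨filter_subset _ E, disjoint_EX_Ei hi⟩

theorem filter_sdiff_Ei_mem {i : B} {Z : Finset B} (hi : i ∉ Z) :
    (E \ Ei E i).filter (fun e => e.1 ∈ Z) = EX E Z := by
  ext e
  simp only [EX, Ei, mem_filter, mem_sdiff]
  grind

theorem filter_sdiff_Ei_eq {i k : B} (hk : k ≠ i) :
    (E \ Ei E i).filter (fun e => e.1 = k) = Ei E k := by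
  ext e
  simp only [Ei, mem_filter, mem_sdiff]
  grind

end Blocks

section Residual

variable {B S : Type*} [DecidableEq B] [DecidableEq S] [Fintype S] {E : Finset (B × S)}
  {fj : S → Finset (B × S) → ℝ} {w x : B × S → ℝ}

/-- `f_w`, computed seller by seller; its polymatroid is `{x ≥ 0 | w + x ∈ P}`. -/
def residual (E : Finset (B × S)) (fj : S → Finset (B × S) → ℝ) (w : B × S → ℝ)
    (F : Finset (B × S)) : ℝ :=
  ∑ j : S, upMin (Ej E j) (fun F' => fj j F' - vsum w F') F

theorem isMonoSubmodularWeak_residual (hfj : ∀ j : S, IsMonoSubmodular (Ej E j) (fj j))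
    (D : Finset (B × S)) : IsMonoSubmodularWeak D (residual E fj w) :=
  IsMonoSubmodularWeak.sum fun j _ => isMonoSubmodularWeak_upMin (fun A A' hA hA' => by
    have := (hfj j).2.2 A A' hA hA'
    have := sum_union_inter (s₁ := A) (s₂ := A') (f := w)
    simp only [vsum]
    linarith) D

theorem residual_empty (hfj : ∀ j : S, IsMonoSubmodular (Ej E j) (fj j)) (hw : memP E fj w) :
    residual E fj w ∅ = 0 := by
  refine sum_eq_zero fun j _ => le_antisymm ?_ (le_upMin fun F hF _ => ?_)
  · simpa [(hfj j).1, vsum] using upMin_le (g := fun F' => fj j F' - vsum w F')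
      (empty_subset (Ej E j)) (F := ∅) (by simp)
  · linarith [hw.2.2 j F hF]

theorem vsum_eq_sum_vsum_Ej (hxE : ∀ e ∉ E, x e = 0) (F : Finset (B × S)) :
    vsum x F = ∑ j : S, vsum x (F ∩ Ej E j) := by
  simp only [vsum, Ej, inter_filter, sum_fiberwise, sum_inter_eq_of_eq_zero hxE]

theorem vsum_le_residual (hx0 : ∀ e, 0 ≤ x e) (hxE : ∀ e ∉ E, x e = 0)
    (hwx : memP E fj (w + x)) (F : Finset (B × S)) : vsum x F ≤ residual E fj w F := by
  rw [vsum_eq_sum_vsum_Ej hxE]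
  refine sum_le_sum fun j _ => le_upMin fun F' hF' hFF' => ?_
  have hmono : vsum x (F ∩ Ej E j) ≤ vsum x F' :=
    sum_le_sum_of_subset_of_nonneg hFF' fun e _ _ => hx0 e
  have hsum : vsum (w + x) F' = vsum w F' + vsum x F' := sum_add_distrib
  linarith [hwx.2.2 j F' hF']

theorem memP_add_of_le_residual (hfj : ∀ j : S, IsMonoSubmodular (Ej E j) (fj j))
    (hw : memP E fj w) (hx0 : ∀ e, 0 ≤ x e) (hxE : ∀ e ∉ E, x e = 0)
    (hxr : ∀ F ⊆ E, vsum x F ≤ residual E fj w F) : memP E fj (w + x) := by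
  refine ⟨fun e => add_nonneg (hw.1 e) (hx0 e), fun e he => by simp [hw.2.1 e he, hxE e he],
    fun j F hF => ?_⟩
  have hres : residual E fj w F ≤ fj j F - vsum w F := by
    refine (sum_le_sum fun j' _ => upMin_le inter_subset_right subset_rfl).trans_eq ?_
    rw [sum_eq_single j (fun j' _ hj' => ?_) (by simp), inter_eq_left.2 hF]
    have : F ∩ Ej E j' = ∅ := by
      refine disjoint_iff_inter_eq_empty.1 (disjoint_left.2 fun e he he' => hj' ?_)
      exact (mem_filter.1 he').2.symm.trans (mem_filter.1 (hF he)).2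
    simp [this, (hfj j').1, vsum]
  have hsum : vsum (w + x) F = vsum w F + vsum x F := sum_add_distrib
  linarith [hxr F (hF.trans (filter_subset _ E))]

end Residual

section Remnant

variable {B S : Type*} [DecidableEq B] [DecidableEq S] {E : Finset (B × S)}
  {fj : S → Finset (B × S) → ℝ} {w x : B × S → ℝ} {d : B → ℝ}

theorem memPwd_zero (hw : memP E fj w) (hd : ∀ i, 0 ≤ d i) : memPwd E fj w d 0 :=
  ⟨fun _ => le_rfl, fun _ _ => rfl, by simpa using hw, fun i => by simpa [vsum] using hd i⟩

theorem fwd_le (hw : memP E fj w) (hd : ∀ i, 0 ≤ d i) {F : Finset (B × S)} {r : ℝ}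
    (h : ∀ x, memPwd E fj w d x → vsum x F ≤ r) : fwd E fj w d F ≤ r :=
  csSup_le ⟨0, 0, memPwd_zero hw hd, by simp [vsum]⟩ fun _ ⟨x, hx, hr⟩ => hr ▸ h x hx

theorem fwd_Ei_le (hw : memP E fj w) (hd : ∀ i, 0 ≤ d i) (i : B) : fwd E fj w d (Ei E i) ≤ d i :=
  fwd_le hw hd fun _ hx => hx.2.2.2 i

variable [Fintype S]

theorem vsum_le_residual_of_memPwd (hx : memPwd E fj w d x) (F : Finset (B × S)) :
    vsum x F ≤ residual E fj w F :=
  vsum_le_residual hx.1 hx.2.1 hx.2.2.1 F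

theorem vsum_le_fwd (hx : memPwd E fj w d x) (F : Finset (B × S)) : vsum x F ≤ fwd E fj w d F :=
  le_csSup ⟨residual E fj w F, fun _ ⟨_, hz, hr⟩ => hr ▸ vsum_le_residual_of_memPwd hz F⟩
    ⟨x, hx, rfl⟩

theorem fwd_le_residual (hw : memP E fj w) (hd : ∀ i, 0 ≤ d i) (F : Finset (B × S)) :
    fwd E fj w d F ≤ residual E fj w F :=
  fwd_le hw hd fun _ hx => vsum_le_residual_of_memPwd hx F

end Remnant

section Clinch

variable {B S : Type*} [DecidableEq B] [DecidableEq S] [Fintype S] {E : Finset (B × S)}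
  {fj : S → Finset (B × S) → ℝ} {w : B × S → ℝ} {d : B → ℝ} {i : B} {ξ : B × S → ℝ}

/-- The rank of the supply left for the buyers in `Z` once buyer `i` holds `ξ`, ignoring
demands. -/
def contractedRank (E : Finset (B × S)) (fj : S → Finset (B × S) → ℝ) (w : B × S → ℝ) (i : B)
    (ξ : B × S → ℝ) (Z : Finset B) : ℝ :=
  shiftMin (residual E fj w) id ξ (Ei E i) (EX E Z)

/-- The explicit form of `h^i_ξ`. -/
def cappedRank (E : Finset (B × S)) (fj : S → Finset (B × S) → ℝ) (w : B × S → ℝ) (d : B → ℝ)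
    (i : B) (ξ : B × S → ℝ) : Finset B → ℝ :=
  infConv (contractedRank E fj w i ξ) d

theorem contractedRank_empty (hfj : ∀ j : S, IsMonoSubmodular (Ej E j) (fj j)) (hw : memP E fj w)
    (hξr : ∀ F ⊆ Ei E i, vsum ξ F ≤ residual E fj w F) : contractedRank E fj w i ξ ∅ = 0 := by
  rw [contractedRank, EX_empty]
  exact shiftMin_id_empty (residual_empty hfj hw) hξr

theorem isMonoSubmodularWeak_contractedResidual (hfj : ∀ j : S, IsMonoSubmodular (Ej E j) (fj j)) :
    IsMonoSubmodularWeak (E \ Ei E i) (shiftMin (residual E fj w) id ξ (Ei E i)) :=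
  (isMonoSubmodularWeak_residual hfj E).shiftMin sdiff_subset
    (fun _ hZ => hZ.trans (Ei_subset E i)) (fun _ hZ => disjoint_of_subset_right hZ sdiff_disjoint)
    (fun _ _ => rfl) fun _ _ => rfl

theorem shiftMin_fwd_le_cappedRank (hw : memP E fj w) (hd : ∀ k, 0 ≤ d k) (Y : Finset B) :
    shiftMin (fwd E fj w d) id ξ (Ei E i) (EX E Y) ≤ cappedRank E fj w d i ξ Y := by
  obtain ⟨Z, hZY, hZ⟩ := exists_infConv_eq (contractedRank E fj w i ξ) d Y
  obtain ⟨F, hF, hFZ⟩ := exists_shiftMin_eq (residual E fj w) id ξ (Ei E i) (EX E Z)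
  have hfwd : fwd E fj w d (EX E Y ∪ F) ≤ residual E fj w (EX E Z ∪ F) + ∑ m ∈ Y \ Z, d m := by
    refine fwd_le hw hd fun x hx => ?_
    have hset : EX E Y ∪ F = (EX E Z ∪ F) ∪ EX E (Y \ Z) := by
      rw [← union_sdiff_of_subset hZY, EX_union, union_sdiff_of_subset hZY]
      ac_rfl
    have hsub := sum_union_inter (s₁ := EX E Z ∪ F) (s₂ := EX E (Y \ Z)) (f := x)
    have hinter : 0 ≤ vsum x ((EX E Z ∪ F) ∩ EX E (Y \ Z)) := sum_nonneg fun e _ => hx.1 e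
    have hdem : vsum x (EX E (Y \ Z)) ≤ ∑ m ∈ Y \ Z, d m := by
      rw [vsum_EX]; exact sum_le_sum fun m _ => hx.2.2.2 m
    have := vsum_le_residual_of_memPwd hx (EX E Z ∪ F)
    simp only [vsum] at *
    rw [hset]
    linarith
  have hmin := shiftMin_le (p := fwd E fj w d) (T := id) (c := ξ) (F := EX E Y) hF
  rw [cappedRank, hZ, contractedRank, hFZ]
  rw [id] at hmin ⊢
  linarith

variable [Fintype B]

theorem isMonoSubmodularWeak_cappedRank (hfj : ∀ j : S, IsMonoSubmodular (Ej E j) (fj j))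
    (hd : ∀ k, 0 ≤ d k) : IsMonoSubmodularWeak (univ.erase i) (cappedRank E fj w d i ξ) :=
  IsMonoSubmodularWeak.infConv (q := contractedRank E fj w i ξ)
    (IsMonoSubmodularWeak.comp (ι := B) (T := EX E) (isMonoSubmodularWeak_contractedResidual hfj)
      (fun _ hZ => EX_subset_sdiff_Ei (subset_erase.1 hZ).2) EX_inter EX_union) hd

theorem exists_memPwd_of_le_contractedRank (hfj : ∀ j : S, IsMonoSubmodular (Ej E j) (fj j))
    (hw : memP E fj w) (hξ0 : ∀ e, 0 ≤ ξ e) (hξi : ∀ e ∉ Ei E i, ξ e = 0)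
    (hξr : ∀ F ⊆ Ei E i, vsum ξ F ≤ residual E fj w F) (hξd : vsum ξ (Ei E i) ≤ d i)
    {u : B → ℝ} (hu0 : ∀ k, 0 ≤ u k)
    (hur : ∀ Z ⊆ univ.erase i, ∑ k ∈ Z, u k ≤ contractedRank E fj w i ξ Z)
    (hud : ∀ k, k ≠ i → u k ≤ d k) :
    ∃ x, memPwd E fj w d x ∧ (∀ e ∈ Ei E i, x e = ξ e) ∧
      ∀ k, k ≠ i → vsum x (Ei E k) = u k := by
  obtain ⟨y, hy0, hyG, hyr, hyu⟩ := exists_fibre_sums_eq (π := Prod.fst) (univ.erase i)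
    (isMonoSubmodularWeak_contractedResidual hfj)
    (shiftMin_id_empty (residual_empty hfj hw) hξr) (fun k _ => hu0 k)
    fun Z hZ => by rw [filter_sdiff_Ei_mem (subset_erase.1 hZ).2]; exact hur Z hZ
  have hyi : ∀ e ∈ Ei E i, y e = 0 := fun e he => hyG e fun h => (mem_sdiff.1 h).2 he
  have hxE : ∀ e ∉ E, (y + ξ) e = 0 := fun e he => by
    simp [hyG e fun h => he (mem_sdiff.1 h).1, hξi e fun h => he (Ei_subset E i h)]
  have hxk : ∀ k, k ≠ i → vsum (y + ξ) (Ei E k) = u k := fun k hk => by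
    have hξk : ∑ e ∈ Ei E k, ξ e = 0 := sum_eq_zero fun e he =>
      hξi e fun h => hk ((mem_filter.1 he).2.symm.trans (mem_filter.1 h).2)
    rw [vsum, funext (Pi.add_apply y ξ), sum_add_distrib, hξk, add_zero,
      ← filter_sdiff_Ei_eq hk]
    exact hyu k (mem_erase.2 ⟨hk, mem_univ k⟩)
  refine ⟨y + ξ, ⟨fun e => add_nonneg (hy0 e) (hξ0 e), hxE,
    memP_add_of_le_residual hfj hw (fun e => add_nonneg (hy0 e) (hξ0 e)) hxE
      fun F hF => sum_add_le_of_le_shiftMin hyi hξi hyr hF, fun m => ?_⟩,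
    fun e he => by simp [hyi e he], hxk⟩
  rcases eq_or_ne m i with rfl | hm
  · rwa [vsum, funext (Pi.add_apply y ξ), sum_add_distrib, sum_eq_zero hyi, zero_add]
  · exact (hxk m hm).trans_le (hud m hm)

theorem mem_PiWd_of_le_cappedRank (hfj : ∀ j : S, IsMonoSubmodular (Ej E j) (fj j))
    (hw : memP E fj w) (hd : ∀ k, 0 ≤ d k) (hξ0 : ∀ e, 0 ≤ ξ e) (hξi : ∀ e ∉ Ei E i, ξ e = 0)
    (hξf : ∀ F ⊆ Ei E i, vsum ξ F ≤ fwd E fj w d F) {u : B → ℝ} (hui : u i = 0)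
    (hu0 : ∀ k, 0 ≤ u k) (hu : ∀ Y ⊆ univ.erase i, ∑ k ∈ Y, u k ≤ cappedRank E fj w d i ξ Y) :
    u ∈ PiWd E fj w d i ξ := by
  have hξr : ∀ F ⊆ Ei E i, vsum ξ F ≤ residual E fj w F :=
    fun F hF => (hξf F hF).trans (fwd_le_residual hw hd F)
  obtain ⟨x, hx, hxi, hxk⟩ := exists_memPwd_of_le_contractedRank hfj hw hξ0 hξi hξr
    ((hξf _ subset_rfl).trans (fwd_Ei_le hw hd i)) hu0
    (fun Z hZ => (hu Z hZ).trans (infConv_le_self Z)) fun k hk => by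
      simpa using (hu {k} (by simpa using hk)).trans
        (infConv_singleton_le (contractedRank_empty hfj hw hξr) k)
  exact ⟨hui, hu0, x, hx, hxi, hxk⟩

theorem sum_le_shiftMin_fwd_of_mem_PiWd {u : B → ℝ} (hu : u ∈ PiWd E fj w d i ξ) {Y : Finset B}
    (hY : Y ⊆ univ.erase i) : ∑ k ∈ Y, u k ≤ shiftMin (fwd E fj w d) id ξ (Ei E i) (EX E Y) := by
  obtain ⟨-, -, x, hx, hxi, hxk⟩ := hu
  refine le_shiftMin fun F hF => ?_
  rw [id]
  have hsplit : vsum x (EX E Y ∪ F) = ∑ k ∈ Y, u k + ∑ e ∈ F, ξ e := by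
    rw [vsum, sum_union (disjoint_of_subset_right hF (disjoint_EX_Ei (subset_erase.1 hY).2)),
      ← vsum, vsum_EX, sum_congr rfl fun e he => hxi e (hF he)]
    exact congrArg (· + _) (sum_congr rfl fun k hk => hxk k fun h => (subset_erase.1 hY).2 (h ▸ hk))
  linarith [vsum_le_fwd hx (EX E Y ∪ F)]

theorem cappedRank_le_shiftMin_fwd (hfj : ∀ j : S, IsMonoSubmodular (Ej E j) (fj j))
    (hw : memP E fj w) (hd : ∀ k, 0 ≤ d k) (hξ0 : ∀ e, 0 ≤ ξ e) (hξi : ∀ e ∉ Ei E i, ξ e = 0)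
    (hξf : ∀ F ⊆ Ei E i, vsum ξ F ≤ fwd E fj w d F) {Y : Finset B} (hY : Y ⊆ univ.erase i) :
    cappedRank E fj w d i ξ Y ≤ shiftMin (fwd E fj w d) id ξ (Ei E i) (EX E Y) := by
  have hr0 := contractedRank_empty hfj hw fun F hF => (hξf F hF).trans (fwd_le_residual hw hd F)
  obtain ⟨u, hu0, huY, hu, huYeq⟩ :=
    (isMonoSubmodularWeak_cappedRank hfj hd).exists_tight (infConv_empty hr0) hY
  rw [← huYeq]
  exact sum_le_shiftMin_fwd_of_mem_PiWd (mem_PiWd_of_le_cappedRank hfj hw hd hξ0 hξi hξf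
    (huY i fun h => (subset_erase.1 hY).2 h) hu0 hu) hY

theorem PiWd_eq_of_le_fwd (hfj : ∀ j : S, IsMonoSubmodular (Ej E j) (fj j))
    (hw : memP E fj w) (hd : ∀ k, 0 ≤ d k) (hξ0 : ∀ e, 0 ≤ ξ e) (hξi : ∀ e ∉ Ei E i, ξ e = 0)
    (hξf : ∀ F ⊆ Ei E i, vsum ξ F ≤ fwd E fj w d F) :
    PiWd E fj w d i ξ = {u | u i = 0 ∧ (∀ k, 0 ≤ u k) ∧
      ∀ Y ⊆ univ.erase i, ∑ k ∈ Y, u k ≤ shiftMin (fwd E fj w d) id ξ (Ei E i) (EX E Y)} := by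
  ext u
  refine ⟨fun hu => ⟨hu.1, hu.2.1, fun Y hY => sum_le_shiftMin_fwd_of_mem_PiWd hu hY⟩,
    fun ⟨hui, hu0, hu⟩ => mem_PiWd_of_le_cappedRank hfj hw hd hξ0 hξi hξf hui hu0
      fun Y hY => (hu Y hY).trans (shiftMin_fwd_le_cappedRank hw hd Y)⟩

end Clinch

/-- `P^i_{w,d}(ξ)` is nonempty iff `h^i_ξ ≥ 0`; in that case `h^i_ξ`
is monotone submodular on `N - i` and `P^i_{w,d}(ξ)` is its polymatroid, where
`h^i_ξ(Y) = min_{F ⊆ E_i} (f_{w,d}(E_Y ∪ F) - ξ(F))`. -/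
theorem PiWd_is_polymatroid
    (E : Finset (B × S)) (fj : S → Finset (B × S) → ℝ)
    (hfj : ∀ j : S, IsMonoSubmodular (Ej E j) (fj j))
    (w : B × S → ℝ) (hw : memP E fj w)
    (d : B → ℝ) (hd : ∀ i : B, 0 ≤ d i)
    (i : B) (ξ : B × S → ℝ) (hξ0 : ∀ e, 0 ≤ ξ e) (hξs : ∀ e ∉ Ei E i, ξ e = 0) :
    ((PiWd E fj w d i ξ).Nonempty ↔
      ∀ Y ⊆ Finset.univ.erase i,
        0 ≤ (Ei E i).powerset.inf' ⟨∅, Finset.empty_mem_powerset _⟩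
          (fun F => fwd E fj w d (EX E Y ∪ F) - vsum ξ F)) ∧
    ((PiWd E fj w d i ξ).Nonempty →
      IsMonoSubmodular (Finset.univ.erase i)
        (fun Y => (Ei E i).powerset.inf' ⟨∅, Finset.empty_mem_powerset _⟩
          (fun F => fwd E fj w d (EX E Y ∪ F) - vsum ξ F)) ∧
      PiWd E fj w d i ξ =
        {u : B → ℝ | u i = 0 ∧ (∀ k, 0 ≤ u k) ∧
          ∀ Y ⊆ Finset.univ.erase i,
            ∑ k ∈ Y, u k ≤ (Ei E i).powerset.inf' ⟨∅, Finset.empty_mem_powerset _⟩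
              (fun F => fwd E fj w d (EX E Y ∪ F) - vsum ξ F)}) := by
  -- `h^i_ξ(Y)` is the contraction of `f_{w,d}` by `ξ`, evaluated at `E_Y`.
  have h_eq : ∀ Y, (Ei E i).powerset.inf' ⟨∅, empty_mem_powerset _⟩
      (fun F => fwd E fj w d (EX E Y ∪ F) - vsum ξ F) =
        shiftMin (fwd E fj w d) id ξ (Ei E i) (EX E Y) := fun _ => rfl
  simp only [h_eq]
  have nonneg_of_nonempty : (PiWd E fj w d i ξ).Nonempty →
      ∀ Y ⊆ univ.erase i, 0 ≤ shiftMin (fwd E fj w d) id ξ (Ei E i) (EX E Y) :=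
    fun ⟨u, hu⟩ Y hY =>
      (sum_nonneg fun k _ => hu.2.1 k).trans (sum_le_shiftMin_fwd_of_mem_PiWd hu hY)
  have feasible_of_nonneg :
      (∀ Y ⊆ univ.erase i, 0 ≤ shiftMin (fwd E fj w d) id ξ (Ei E i) (EX E Y)) →
        ∀ F ⊆ Ei E i, vsum ξ F ≤ fwd E fj w d F := fun hpos F hF => by
    simpa [EX_empty, vsum] using (hpos ∅ (empty_subset _)).trans (shiftMin_le hF)
  refine ⟨⟨nonneg_of_nonempty, fun hpos => ?_⟩, fun hne => ?_⟩
  · rw [PiWd_eq_of_le_fwd hfj hw hd hξ0 hξs (feasible_of_nonneg hpos)]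
    exact ⟨0, rfl, fun _ => le_rfl, fun Y hY => by simpa using hpos Y hY⟩
  have hξf := feasible_of_nonneg (nonneg_of_nonempty hne)
  have hr0 := contractedRank_empty hfj hw fun F hF => (hξf F hF).trans (fwd_le_residual hw hd F)
  refine ⟨(isMonoSubmodularWeak_cappedRank hfj hd).isMonoSubmodular_of_eqOn (infConv_empty hr0)
    fun Y hY => ?_, PiWd_eq_of_le_fwd hfj hw hd hξ0 hξs hξf⟩
  exact le_antisymm (shiftMin_fwd_le_cappedRank hw hd Y)
    (cappedRank_le_shiftMin_fwd hfj hw hd hξ0 hξs hξf hY)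

end TwoSidedMarket
end
end
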